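/- arXiv:1307.5281 — 8 statements merged into one kernel-verified Lean document; each statement's English description precedes it below -/
import Mathlib

section
/- Let V be a finite set of vertices with a distinguished element v_c, let d : V → ℕ be a degree function satisfying d(v) ≥ 3 for every v ≠ v_c and d(v_c) ≥ 1, and let E, L be natural numbers such that ∑_{v ∈ V} d(v) = 2E and E = |V| − 1 + L. Then E ≤ 3L − 1 and |V| ≤ 2L. Moreover, if E = 3L − 1, then d(v) = 3 for every v ≠ v_c and d(v_c) = 1. -/
/-!
Degrees are bounded below pointwise by the profile that is `3` everywhere except `1` at the
ciliated vertex, so the handshake identity gives `2E ≥ 3|V| - 2`. Eliminating `E` or `|V|` with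
`E + 1 = |V| + L` yields both bounds, and `E + 1 = 3L` forces equality in the degree sum, hence
equality with the minimal profile at every vertex.
-/

open Function

theorem Fintype.sum_update_const {ι M : Type*} [Fintype ι] [DecidableEq ι] [AddCommMonoid M]
    (i : ι) (a b : M) :
    ∑ j, update (fun _ => a) i b j = b + (Fintype.card ι - 1) • a := by
  rw [Fintype.sum_eq_add_sum_compl i, Finset.sum_congr rfl fun j hj =>
    update_of_ne (Finset.notMem_singleton.1 (Finset.mem_compl.1 hj)) b fun _ => a]
  simp [Finset.card_compl]

theorem Fintype.eq_of_le_of_sum_eq {ι M : Type*} [Fintype ι] [AddCommMonoid M] [PartialOrder M]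
    [IsOrderedCancelAddMonoid M] {f g : ι → M} (hle : f ≤ g) (hsum : ∑ i, f i = ∑ i, g i) :
    f = g :=
  hle.eq_or_lt.resolve_right fun hlt => (Fintype.sum_strictMono hlt).ne hsum

/-- Degree bound for reduced graphs: if every non-ciliated vertex has degree ≥ 3,
the ciliated vertex has degree ≥ 1, the handshake identity `∑ d = 2E` holds and
`E = |V| - 1 + L`, then `E ≤ 3L - 1` and `|V| ≤ 2L`; moreover if `E = 3L - 1`
then every non-ciliated vertex has degree exactly 3 and the ciliated vertex degree 1. -/
theorem reduced_graph_degree_bound {V : Type*} [Fintype V] (vc : V) (d : V → ℕ)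
    (E L : ℕ)
    (hd : ∀ v, v ≠ vc → 3 ≤ d v) (hdc : 1 ≤ d vc)
    (hsum : ∑ v, d v = 2 * E)
    (hEL : E + 1 = Fintype.card V + L) :
    E + 1 ≤ 3 * L ∧ Fintype.card V ≤ 2 * L ∧
      (E + 1 = 3 * L → (∀ v, v ≠ vc → d v = 3) ∧ d vc = 1) := by
  classical
  set m : V → ℕ := update (fun _ => 3) vc 1
  have hmd : m ≤ d := update_le_iff.2 ⟨hdc, hd⟩
  have hsum_m : ∑ v, m v = 1 + (Fintype.card V - 1) * 3 := Fintype.sum_update_const vc 3 1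
  have hsum_lower : 1 + (Fintype.card V - 1) * 3 ≤ 2 * E :=
    hsum_m ▸ hsum ▸ Fintype.sum_mono hmd
  have hV : 0 < Fintype.card V := Fintype.card_pos_iff.2 ⟨vc⟩
  refine ⟨by omega, by omega, fun hE => ?_⟩
  have hdm : m = d := Fintype.eq_of_le_of_sum_eq hmd (by rw [hsum_m, hsum]; omega)
  obtain ⟨hdc_eq, hd_eq⟩ := update_eq_iff.1 hdm
  exact ⟨fun v hv => (hd_eq v hv).symm, hdc_eq.symm⟩
end

section
/- For every real number λ with 0 < |λ| < 1/24, the series ∑_{n=0}^∞ (2/(n+2))·(3^n/(n+1))·binomial(2n, n)·(−2λ)^n converges and its sum equals (−1 − 36λ + (1 + 24λ)^{3/2})/(216·λ²). -/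
/-!
Up to the factor `1 / (216 λ²)`, the series is the tail from `n = 2` of the binomial series of
`(1 + 24λ)^{3/2}`: with `x = 24λ = -4 · 3 · (-2λ)`, the coefficient identity
`choose (3/2) (n + 2) · (-4)^(n + 2) = 12 · C(2n, n) / ((n + 1)(n + 2))` turns the `(n + 2)`-th
binomial term into `216 λ²` times the `n`-th term of the series, and the first two binomial terms
are `1 + 36λ`.
-/

theorem Ring.succ_nsmul_choose_succ {R : Type*} [NonAssocRing R] [Pow R ℕ] [BinomialRing R]
    [NatPowAssoc R] (r : R) (k : ℕ) :
    (k + 1) • Ring.choose r (k + 1) = Ring.choose r k * (r - k) := by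
  simpa [Nat.choose_succ_self_right, Ring.choose_one_right] using
    Ring.choose_smul_choose r (Nat.le_succ k)

theorem Ring.choose_succ_eq_div {K : Type*} [Field K] [CharZero K] (a : K) (k : ℕ) :
    Ring.choose a (k + 1) = Ring.choose a k * (a - k) / (k + 1) := by
  rw [eq_div_iff (by exact_mod_cast k.succ_ne_zero), ← Ring.succ_nsmul_choose_succ, nsmul_eq_mul]
  push_cast
  ring

theorem Real.hasSum_choose_mul_pow (a : ℝ) {x : ℝ} (hx : |x| < 1) :
    HasSum (fun n ↦ Ring.choose a n * x ^ n) ((1 + x) ^ a) := by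
  have hx' : x ∈ Metric.eball (0 : ℝ) 1 := by
    simpa [← edist_zero_right, edist_dist, ← ENNReal.ofReal_one] using hx
  simpa [binomialSeries, FormalMultilinearSeries.ofScalars_apply_eq, mul_comm] using
    Real.one_add_rpow_hasFPowerSeriesOnBall_zero.hasSum hx'

theorem choose_three_halves_add_two_mul_neg_four_pow (n : ℕ) :
    Ring.choose (3 / 2 : ℝ) (n + 2) * (-4) ^ (n + 2) =
      12 * n.centralBinom / ((n + 1) * (n + 2)) := by
  induction n with
  | zero => norm_num [Ring.choose_succ_eq_div, Ring.choose_zero_right]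
  | succ n ih =>
    have hcentral : ((n + 1 : ℕ) : ℝ) * (n + 1).centralBinom =
        2 * (2 * n + 1) * n.centralBinom := by
      exact_mod_cast n.succ_mul_centralBinom_succ
    have hn : (n : ℝ) + 1 ≠ 0 := n.cast_add_one_ne_zero
    calc Ring.choose (3 / 2 : ℝ) (n + 1 + 2) * (-4) ^ (n + 1 + 2)
        = Ring.choose (3 / 2 : ℝ) (n + 2) * (-4) ^ (n + 2) * ((4 * n + 2) / (n + 3)) := by
          rw [Ring.choose_succ_eq_div, pow_succ]
          push_cast
          ring
      _ = 12 * ((n + 1 : ℕ) : ℝ) * (n + 1).centralBinom /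
            ((n + 1) * ((n + 1 + 1) * (n + 1 + 2))) := by
          rw [ih, mul_assoc 12, hcentral]
          field_simp
          ring
      _ = _ := by
          push_cast
          field_simp

/-- The planar two-point function of the quartic matrix model: for `0 < |λ| < 1/24`,
`∑ (2/(n+2))·(3ⁿ/(n+1))·C(2n,n)·(-2λ)ⁿ = (-1 - 36λ + (1+24λ)^{3/2})/(216 λ²)`. -/
theorem matrix_planar_two_point (l : ℝ) (h0 : 0 < |l|) (h1 : |l| < 1 / 24) :
    HasSum
      (fun n : ℕ => 2 / ((n : ℝ) + 2) * ((3 : ℝ) ^ n / ((n : ℝ) + 1)) *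
        (Nat.choose (2 * n) n : ℝ) * (-2 * l) ^ n)
      ((-1 - 36 * l + (1 + 24 * l) ^ ((3 : ℝ) / 2)) / (216 * l ^ 2)) := by
  have hl : l ≠ 0 := abs_pos.mp h0
  have hx : |24 * l| < 1 := by
    rw [abs_mul, abs_of_pos (by norm_num : (0 : ℝ) < 24)]
    linarith
  have htail := (hasSum_nat_add_iff' 2).mpr (Real.hasSum_choose_mul_pow (3 / 2) hx)
  have hhead : ∑ i ∈ Finset.range 2, Ring.choose (3 / 2 : ℝ) i * (24 * l) ^ i = 1 + 36 * l := by
    norm_num [Finset.sum_range_succ, Ring.choose_zero_right, Ring.choose_one_right]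
    ring
  have hterm (n : ℕ) : 2 / ((n : ℝ) + 2) * ((3 : ℝ) ^ n / ((n : ℝ) + 1)) *
      (Nat.choose (2 * n) n : ℝ) * (-2 * l) ^ n =
        Ring.choose (3 / 2 : ℝ) (n + 2) * (24 * l) ^ (n + 2) / (216 * l ^ 2) := by
    rw [show 24 * l = -4 * (3 * (-2 * l)) by ring, mul_pow (-4 : ℝ), ← mul_assoc,
      choose_three_halves_add_two_mul_neg_four_pow, Nat.centralBinom_eq_two_mul_choose,
      mul_pow 3]
    field_simp
    ring
  rw [hhead] at htail
  rw [show -1 - 36 * l + (1 + 24 * l) ^ ((3 : ℝ) / 2) =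
    (1 + 24 * l) ^ ((3 : ℝ) / 2) - (1 + 36 * l) by ring]
  exact (htail.div_const _).congr_fun hterm
end

section
/- Let D ≥ 3 be an integer and set T(w) = (1 − √(1 − 4w))/(2w) for 0 < w ≤ 1/4. Then the limit as z tends to (4D)^{-1} from below of √(1 − 4Dz) · D · T(Dz)^5 · (z/(1 − z·T(Dz)²)) · (D(D−1)·z²·T(Dz)²/((1 − D·z·T(Dz)²)(1 − z·T(Dz)²))) exists and equals D/(D−1). -/
/-!
Write `w = D z` and `T = T(w)`. The quadratic relation `w T² = T − 1` gives `1 − D z T² = √(1 − 4w) · T`,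
so the vanishing factor `√(1 − 4Dz)` cancels against the denominator of the bridge, and
`z T² = (T − 1)/D` turns the whole amplitude into the rational function `D(D − 1)(T − 1)³/(D + 1 − T)²`
of `T`. As `z → (4D)⁻¹` we have `T(Dz) → T(1/4) = 2`, and the limit is `D(D − 1)/(D − 1)² = D/(D − 1)`.
-/

open Filter

/-- Closed form of the plane-tree generating function. -/
noncomputable def Tgf (w : ℝ) : ℝ := (1 - Real.sqrt (1 - 4 * w)) / (2 * w)

theorem Tgf_quarter : Tgf (1 / 4) = 2 := by
  norm_num [Tgf]

theorem continuousAt_Tgf {w : ℝ} (hw : w ≠ 0) : ContinuousAt Tgf w := by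
  unfold Tgf
  exact ContinuousAt.div (by fun_prop) (by fun_prop) (by simpa using hw)

theorem Tgf_eq_two_div_one_add_sqrt {w : ℝ} (hw0 : w ≠ 0) (hw : w ≤ 1 / 4) :
    Tgf w = 2 / (1 + Real.sqrt (1 - 4 * w)) := by
  have hs : Real.sqrt (1 - 4 * w) ^ 2 = 1 - 4 * w := Real.sq_sqrt (by linarith)
  have hpos : 0 < 1 + Real.sqrt (1 - 4 * w) := by positivity
  rw [Tgf, div_eq_div_iff (by simpa using hw0) hpos.ne']
  linear_combination -hs

theorem mul_Tgf_sq {w : ℝ} (hw0 : w ≠ 0) (hw : w ≤ 1 / 4) : w * Tgf w ^ 2 = Tgf w - 1 := by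
  have hs : Real.sqrt (1 - 4 * w) ^ 2 = 1 - 4 * w := Real.sq_sqrt (by linarith)
  have hpos : 0 < 1 + Real.sqrt (1 - 4 * w) := by positivity
  rw [Tgf_eq_two_div_one_add_sqrt hw0 hw]
  generalize Real.sqrt (1 - 4 * w) = s at hs hpos
  field_simp
  linear_combination hs

theorem sqrt_mul_Tgf {w : ℝ} (hw0 : w ≠ 0) (hw : w ≤ 1 / 4) :
    Real.sqrt (1 - 4 * w) * Tgf w = 1 - w * Tgf w ^ 2 := by
  have hpos : 0 < 1 + Real.sqrt (1 - 4 * w) := by positivity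
  rw [mul_Tgf_sq hw0 hw, Tgf_eq_two_div_one_add_sqrt hw0 hw]
  generalize Real.sqrt (1 - 4 * w) = s at hpos
  field_simp
  ring

theorem one_loop_colored_tadpole_eq {D z : ℝ} (hD : 1 < D) (hz : 0 < z) (hDz : D * z < 1 / 4) :
    Real.sqrt (1 - 4 * D * z) * D * Tgf (D * z) ^ 5 * (z / (1 - z * Tgf (D * z) ^ 2)) *
        (D * (D - 1) * z ^ 2 * Tgf (D * z) ^ 2 /
          ((1 - D * z * Tgf (D * z) ^ 2) * (1 - z * Tgf (D * z) ^ 2))) =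
      D * (D - 1) * (Tgf (D * z) - 1) ^ 3 / (D + 1 - Tgf (D * z)) ^ 2 := by
  have hw0 : D * z ≠ 0 := by positivity
  have hw : D * z ≤ 1 / 4 := hDz.le
  have hs : 0 < Real.sqrt (1 - 4 * (D * z)) := Real.sqrt_pos.mpr (by linarith)
  have hT : 0 < Tgf (D * z) := by
    rw [Tgf_eq_two_div_one_add_sqrt hw0 hw]; positivity
  have hT2 : Tgf (D * z) ≤ 2 := by
    rw [Tgf_eq_two_div_one_add_sqrt hw0 hw, div_le_iff₀ (by positivity)]; linarith
  have hquad := mul_Tgf_sq hw0 hw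
  have hsqrt := sqrt_mul_Tgf hw0 hw
  rw [mul_assoc 4 D z]
  generalize Tgf (D * z) = T at hT hT2 hquad hsqrt
  generalize Real.sqrt (1 - 4 * (D * z)) = s at hs hsqrt
  have hbridge : 1 - D * z * T ^ 2 = s * T := by linarith
  have hloop : 1 - z * T ^ 2 = (D + 1 - T) / D := by
    field_simp; linear_combination -hquad
  have hzT : z = (T - 1) / (D * T ^ 2) := by
    field_simp; linear_combination hquad
  have hT_ne : D + 1 - T ≠ 0 := by linarith
  rw [hbridge, hloop, hzT]
  field_simp

theorem tendsto_one_loop_colored_tadpole {D : ℝ} (hD : 1 < D) :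
    Tendsto
      (fun z : ℝ =>
        Real.sqrt (1 - 4 * D * z) * D * Tgf (D * z) ^ 5 * (z / (1 - z * Tgf (D * z) ^ 2)) *
          (D * (D - 1) * z ^ 2 * Tgf (D * z) ^ 2 /
            ((1 - D * z * Tgf (D * z) ^ 2) * (1 - z * Tgf (D * z) ^ 2))))
      (nhdsWithin (1 / (4 * D)) (Set.Iio (1 / (4 * D)))) (nhds (D / (D - 1))) := by
  have hc : 0 < 1 / (4 * D) := by positivity
  have hDc : D * (1 / (4 * D)) = 1 / 4 := by field_simp
  have hTgf : Tendsto (fun z : ℝ => Tgf (D * z)) (nhdsWithin (1 / (4 * D)) (Set.Iio (1 / (4 * D))))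
      (nhds 2) := by
    have hTc : ContinuousAt (fun z : ℝ => Tgf (D * z)) (1 / (4 * D)) :=
      ContinuousAt.comp (g := Tgf) (by rw [hDc]; exact continuousAt_Tgf (by norm_num))
        (by fun_prop)
    have := hTc.tendsto
    rw [hDc, Tgf_quarter] at this
    exact this.mono_left nhdsWithin_le_nhds
  have hrational : Tendsto (fun T : ℝ => D * (D - 1) * (T - 1) ^ 3 / (D + 1 - T) ^ 2) (nhds 2)
      (nhds (D / (D - 1))) := by
    have hcont : ContinuousAt (fun T : ℝ => D * (D - 1) * (T - 1) ^ 3 / (D + 1 - T) ^ 2) 2 :=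
      ContinuousAt.div (by fun_prop) (by fun_prop) (by nlinarith)
    convert hcont.tendsto using 2
    have : D - 1 ≠ 0 := by linarith
    rw [show D + 1 - 2 = D - 1 by ring]
    field_simp
    ring
  refine (hrational.comp hTgf).congr' ?_
  filter_upwards [self_mem_nhdsWithin, nhdsWithin_le_nhds (eventually_gt_nhds hc)] with z hzc hz
  refine (one_loop_colored_tadpole_eq hD hz ?_).symm
  rw [← hDc]
  exact mul_lt_mul_of_pos_left hzc (by positivity)

/-- The dominant one-loop reduced-graph contribution: as `z → (4D)⁻¹` from below,
`√(1-4Dz)·D·T(Dz)⁵·(z/(1-zT²))·(D(D-1)z²T²/((1-DzT²)(1-zT²))) → D/(D-1)`. -/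
theorem one_loop_colored_tadpole_critical (D : ℕ) (hD : 3 ≤ D) :
    Tendsto
      (fun z : ℝ =>
        Real.sqrt (1 - 4 * (D : ℝ) * z) * (D : ℝ) * (Tgf ((D : ℝ) * z)) ^ 5 *
          (z / (1 - z * (Tgf ((D : ℝ) * z)) ^ 2)) *
          ((D : ℝ) * ((D : ℝ) - 1) * z ^ 2 * (Tgf ((D : ℝ) * z)) ^ 2 /
            ((1 - (D : ℝ) * z * (Tgf ((D : ℝ) * z)) ^ 2) *
              (1 - z * (Tgf ((D : ℝ) * z)) ^ 2))))
      (nhdsWithin (1 / (4 * (D : ℝ))) (Set.Iio (1 / (4 * (D : ℝ)))))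
      (nhds ((D : ℝ) / ((D : ℝ) - 1))) :=
  tendsto_one_loop_colored_tadpole (by exact_mod_cast (by omega : 1 < D))
end

section
/- Let D be an integer with 3 ≤ D ≤ 5, let L ≥ 1 be an integer, let x > 0 be real, and set T(w) = (1 − √(1 − 4w))/(2w). For real N > 0 large enough that 0 < 1/(4D) − x·N^{−(D−2)}, set z_N = 1/(4D) − x·N^{−(D−2)} and A_L(N) = N^{−(D−2)L} · catalan(L−1) · z_N^{5L−2} · D^{3L−1} · (D−1)^{2L−1} · T(D·z_N)^{8L−2} / ((1 − z_N·T(D·z_N)²)^{3L−1} · (1 − 4D·z_N)^{L−1/2}). Then there exist constants C > 0 and N₀ such that for all N ≥ N₀, |N^{D/2−1}·A_L(N) − 8·√D·catalan(L−1)·x^{1/2−L}/(16(D−1))^L| ≤ C·N^{−1/2}. -/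
/-- The rescaled coupling `z_N = 1/(4D) - x·N^{-(D-2)}`. -/
noncomputable def zN (D : ℕ) (x N : ℝ) : ℝ := 1 / (4 * (D : ℝ)) - x * N ^ (-((D : ℝ) - 2))

/-- The total amplitude of the `L`-loop cherry trees at the rescaled coupling `z_N`. -/
noncomputable def cherryAmp (D L : ℕ) (x N : ℝ) : ℝ :=
  N ^ (-((D : ℝ) - 2) * (L : ℝ)) * (catalan (L - 1) : ℝ) *
    (zN D x N) ^ (5 * L - 2) * (D : ℝ) ^ (3 * L - 1) * ((D : ℝ) - 1) ^ (2 * L - 1) *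
    (Tgf ((D : ℝ) * zN D x N)) ^ (8 * L - 2) /
    ((1 - zN D x N * (Tgf ((D : ℝ) * zN D x N)) ^ 2) ^ (3 * L - 1) *
      (1 - 4 * (D : ℝ) * zN D x N) ^ ((L : ℝ) - 1 / 2))

/-!
Put `s = √x · N^{-(D-2)/2}`. Then `z_N = 1/(4D) - s²` and `√(1 - 4D z_N) = 2√D · s`, so
`T(D z_N) = (1 - 2√D s) / (2D z_N)` is a rational function of `s`, and all powers of `N`
(including the one hidden in `(1 - 4D z_N)^{L-1/2}`) cancel exactly:
`N^{D/2-1} A_L(N) = catalan(L-1) (4Dx)^{1/2-L} h(s)` with `h = scaledAmp D L` differentiable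
at `0`. Hence the error is `O(h(s) - h(0)) = O(s)`, and `s = O(N^{-1/2})` because `D ≥ 3`.
-/

open Filter Asymptotics Real Topology

noncomputable def cherryScale (D : ℕ) (x N : ℝ) : ℝ := √x * N ^ (-((D : ℝ) - 2) / 2)

noncomputable def scaledCoupling (D : ℕ) (s : ℝ) : ℝ := 1 / (4 * (D : ℝ)) - s ^ 2

noncomputable def scaledTgf (D : ℕ) (s : ℝ) : ℝ :=
  (1 - 2 * √(D : ℝ) * s) / (2 * (D : ℝ) * scaledCoupling D s)

noncomputable def scaledAmp (D L : ℕ) (s : ℝ) : ℝ :=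
  scaledCoupling D s ^ (5 * L - 2) * (D : ℝ) ^ (3 * L - 1) * ((D : ℝ) - 1) ^ (2 * L - 1) *
    scaledTgf D s ^ (8 * L - 2) / (1 - scaledCoupling D s * scaledTgf D s ^ 2) ^ (3 * L - 1)

section Scale

variable {D : ℕ} {x N : ℝ}

lemma cherryScale_sq (hx : 0 ≤ x) (hN : 0 ≤ N) :
    cherryScale D x N ^ 2 = x * N ^ (-((D : ℝ) - 2)) := by
  rw [cherryScale, mul_pow, sq_sqrt hx, ← rpow_natCast, ← rpow_mul hN]
  norm_num

lemma zN_eq_scaledCoupling (hx : 0 ≤ x) (hN : 0 ≤ N) :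
    zN D x N = scaledCoupling D (cherryScale D x N) := by
  rw [scaledCoupling, cherryScale_sq hx hN, zN]

lemma one_sub_four_mul_zN (hD : D ≠ 0) :
    1 - 4 * (D : ℝ) * zN D x N = 4 * (D : ℝ) * x * N ^ (-((D : ℝ) - 2)) := by
  rw [zN]; field_simp; ring

lemma Tgf_mul_zN (hD : D ≠ 0) (hx : 0 ≤ x) (hN : 0 ≤ N) :
    Tgf ((D : ℝ) * zN D x N) = scaledTgf D (cherryScale D x N) := by
  have hs : 0 ≤ cherryScale D x N := by unfold cherryScale; positivity
  have hsq : 1 - 4 * ((D : ℝ) * zN D x N) = (2 * √(D : ℝ) * cherryScale D x N) ^ 2 := by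
    rw [zN_eq_scaledCoupling hx hN, scaledCoupling, mul_pow, mul_pow, sq_sqrt D.cast_nonneg]
    field_simp; ring
  rw [Tgf, scaledTgf, hsq, sqrt_sq (by positivity), zN_eq_scaledCoupling hx hN]
  ring

lemma rpow_half_mul_rpow_div_rpow (hN : 0 < N) {c : ℝ} (hc : 0 ≤ c) (a L : ℝ) :
    N ^ (a / 2) * N ^ (-a * L) / (c * N ^ (-a)) ^ (L - 1 / 2) = c ^ (1 / 2 - L) := by
  have hNpow : N ^ (-a * (L - 1 / 2)) ≠ 0 := (rpow_pos_of_pos hN _).ne'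
  rw [mul_rpow hc (rpow_nonneg hN.le _), ← rpow_mul hN.le, ← rpow_add hN,
    show a / 2 + -a * L = -a * (L - 1 / 2) by ring, show 1 / 2 - L = -(L - 1 / 2) by ring,
    rpow_neg hc]
  field_simp

end Scale

lemma rpow_mul_cherryAmp {D : ℕ} (hD : D ≠ 0) (L : ℕ) {x N : ℝ} (hx : 0 ≤ x)
    (hN : 0 < N) :
    N ^ ((D : ℝ) / 2 - 1) * cherryAmp D L x N =
      (catalan (L - 1) : ℝ) * (4 * (D : ℝ) * x) ^ ((1 : ℝ) / 2 - L) *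
        scaledAmp D L (cherryScale D x N) := by
  rw [← rpow_half_mul_rpow_div_rpow hN (by positivity) ((D : ℝ) - 2),
    ← one_sub_four_mul_zN hD, cherryAmp, scaledAmp, Tgf_mul_zN hD hx hN.le,
    ← zN_eq_scaledCoupling hx hN.le,
    show ((D : ℝ) - 2) / 2 = (D : ℝ) / 2 - 1 by ring]
  ring

section ValueAtZero

variable {D : ℕ}

lemma natCast_sub_one_ne_zero (hD : 2 ≤ D) : (D : ℝ) - 1 ≠ 0 := by
  rw [sub_ne_zero]; exact_mod_cast (by omega : D ≠ 1)

lemma scaledCoupling_zero : scaledCoupling D 0 = 1 / (4 * (D : ℝ)) := by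
  simp [scaledCoupling]

lemma scaledTgf_zero (hD : D ≠ 0) : scaledTgf D 0 = 2 := by
  rw [scaledTgf, scaledCoupling_zero]
  field_simp
  ring

lemma one_sub_scaledCoupling_mul_scaledTgf_sq_zero (hD : D ≠ 0) :
    1 - scaledCoupling D 0 * scaledTgf D 0 ^ 2 = ((D : ℝ) - 1) / D := by
  rw [scaledTgf_zero hD, scaledCoupling_zero]
  field_simp
  ring

lemma scaledAmp_zero_succ (hD : 2 ≤ D) (l : ℕ) :
    scaledAmp D (l + 1) 0 = (D : ℝ) ^ (l + 1) / (4 ^ l * ((D : ℝ) - 1) ^ (l + 1)) := by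
  have hD0 : (D : ℝ) ≠ 0 := by exact_mod_cast (by omega : D ≠ 0)
  have hD1 := natCast_sub_one_ne_zero hD
  rw [scaledAmp, one_sub_scaledCoupling_mul_scaledTgf_sq_zero (by omega),
    scaledTgf_zero (by omega), scaledCoupling_zero, show 5 * (l + 1) - 2 = 5 * l + 3 by omega,
    show 3 * (l + 1) - 1 = 3 * l + 2 by omega, show 2 * (l + 1) - 1 = 2 * l + 1 by omega,
    show 8 * (l + 1) - 2 = 8 * l + 6 by omega, div_pow, div_pow, mul_pow,
    show (4 : ℝ) = 2 ^ 2 by norm_num, ← pow_mul, ← pow_mul]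
  field_simp
  ring

lemma differentiableAt_scaledAmp (hD : 2 ≤ D) (L : ℕ) :
    DifferentiableAt ℝ (scaledAmp D L) 0 := by
  have hD0 : (D : ℝ) ≠ 0 := by exact_mod_cast (by omega : D ≠ 0)
  have hD1 := natCast_sub_one_ne_zero hD
  have hCoupling : DifferentiableAt ℝ (scaledCoupling D) 0 := by
    unfold scaledCoupling; fun_prop
  have hTgf : DifferentiableAt ℝ (scaledTgf D) 0 := by
    refine DifferentiableAt.div (by fun_prop) (by fun_prop) ?_
    rw [scaledCoupling_zero]
    field_simp
    norm_num
  refine DifferentiableAt.div (by fun_prop) (by fun_prop) ?_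
  rw [one_sub_scaledCoupling_mul_scaledTgf_sq_zero (by omega)]
  exact pow_ne_zero _ (div_ne_zero hD1 hD0)

end ValueAtZero

lemma catalan_mul_rpow_mul_scaledAmp_zero {D L : ℕ} (hD : 2 ≤ D) (hL : 1 ≤ L) {x : ℝ}
    (hx : 0 ≤ x) :
    (catalan (L - 1) : ℝ) * (4 * (D : ℝ) * x) ^ ((1 : ℝ) / 2 - L) * scaledAmp D L 0 =
      8 * √(D : ℝ) * (catalan (L - 1) : ℝ) * x ^ ((1 : ℝ) / 2 - L) /
        (16 * ((D : ℝ) - 1)) ^ L := by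
  obtain ⟨l, rfl⟩ : ∃ l, L = l + 1 := ⟨L - 1, by omega⟩
  have hD0 : (0 : ℝ) < D := by exact_mod_cast (by omega : 0 < D)
  have hD1 := natCast_sub_one_ne_zero hD
  have h4D :
      (4 * (D : ℝ)) ^ ((1 : ℝ) / 2 - ↑(l + 1)) = 2 * √(D : ℝ) / (4 * D) ^ (l + 1) := by
    rw [show (1 : ℝ) / 2 - ↑(l + 1) = 1 / 2 - ↑(l + 1 : ℕ) by rfl, rpow_sub (by positivity),
      rpow_natCast, ← sqrt_eq_rpow, sqrt_mul (by norm_num), show (4 : ℝ) = 2 ^ 2 by norm_num,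
      sqrt_sq (by norm_num)]
  rw [mul_rpow (by positivity) hx, h4D, scaledAmp_zero_succ hD, Nat.add_sub_cancel, mul_pow,
    mul_pow, show (16 : ℝ) = 4 ^ 2 by norm_num, ← pow_mul]
  field_simp
  ring

lemma isBigO_rpow_rpow_atTop {a b : ℝ} (hab : a ≤ b) :
    (fun N : ℝ => N ^ a) =O[atTop] fun N => N ^ b := by
  refine IsBigO.of_bound 1 ?_
  filter_upwards [eventually_ge_atTop 1] with N hN
  rw [one_mul, norm_of_nonneg (rpow_nonneg (by linarith) _),
    norm_of_nonneg (rpow_nonneg (by linarith) _)]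
  exact rpow_le_rpow_of_exponent_le hN hab

lemma cherryScale_isBigO {D : ℕ} (hD : 3 ≤ D) (x : ℝ) :
    cherryScale D x =O[atTop] fun N => N ^ (-(1 : ℝ) / 2) := by
  have hD' : (3 : ℝ) ≤ D := by exact_mod_cast hD
  exact (isBigO_rpow_rpow_atTop (by linarith)).const_mul_left √x

lemma tendsto_cherryScale {D : ℕ} (hD : 3 ≤ D) (x : ℝ) :
    Tendsto (cherryScale D x) atTop (𝓝 0) := by
  refine (cherryScale_isBigO hD x).trans_tendsto ?_
  simpa only [neg_div] using tendsto_rpow_neg_atTop (y := 1 / 2) (by norm_num)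

lemma eventually_pos_zN {D : ℕ} (hD : 2 < D) (x : ℝ) : ∀ᶠ N in atTop, 0 < zN D x N := by
  have hD' : (2 : ℝ) < D := by exact_mod_cast hD
  have h := ((tendsto_rpow_neg_atTop (y := (D : ℝ) - 2) (by linarith)).const_mul x).const_sub
    (1 / (4 * (D : ℝ)))
  rw [mul_zero, sub_zero] at h
  exact h.eventually_const_lt (by positivity)

lemma isBigO_rpow_mul_cherryAmp_sub {D L : ℕ} (hD : 3 ≤ D) (hL : 1 ≤ L) {x : ℝ}
    (hx : 0 ≤ x) :
    (fun N => N ^ ((D : ℝ) / 2 - 1) * cherryAmp D L x N -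
      8 * √(D : ℝ) * (catalan (L - 1) : ℝ) * x ^ ((1 : ℝ) / 2 - L) /
        (16 * ((D : ℝ) - 1)) ^ L) =O[atTop] fun N => N ^ (-(1 : ℝ) / 2) := by
  have hD2 : 2 ≤ D := by omega
  set c := (catalan (L - 1) : ℝ) * (4 * (D : ℝ) * x) ^ ((1 : ℝ) / 2 - L)
  have hamp : (fun N => c * (scaledAmp D L (cherryScale D x N) - scaledAmp D L 0)) =ᶠ[atTop]
      fun N => N ^ ((D : ℝ) / 2 - 1) * cherryAmp D L x N -
        8 * √(D : ℝ) * (catalan (L - 1) : ℝ) * x ^ ((1 : ℝ) / 2 - L) /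
          (16 * ((D : ℝ) - 1)) ^ L := by
    filter_upwards [eventually_gt_atTop 0] with N hN
    rw [rpow_mul_cherryAmp (by omega : D ≠ 0) L hx hN,
      ← catalan_mul_rpow_mul_scaledAmp_zero hD2 hL hx]
    ring
  refine IsBigO.congr' (IsBigO.const_mul_left ?_ c) hamp EventuallyEq.rfl
  have h := (differentiableAt_scaledAmp hD2 L).isBigO_sub.comp_tendsto
    (tendsto_cherryScale hD x)
  simp only [Function.comp_def, sub_zero] at h
  exact h.trans (cherryScale_isBigO hD x)

theorem cherry_tree_asymptotics_general (D : ℕ) (hD1 : 3 ≤ D)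
    (L : ℕ) (hL : 1 ≤ L) (x : ℝ) (hx : 0 < x) :
    ∃ C > (0 : ℝ), ∃ N₀ : ℝ, ∀ N : ℝ, N₀ ≤ N →
      0 < 1 / (4 * (D : ℝ)) - x * N ^ (-((D : ℝ) - 2)) ∧
      |N ^ ((D : ℝ) / 2 - 1) * cherryAmp D L x N -
          8 * Real.sqrt (D : ℝ) * (catalan (L - 1) : ℝ) * x ^ ((1 : ℝ) / 2 - (L : ℝ)) /
            (16 * ((D : ℝ) - 1)) ^ L|
        ≤ C * N ^ (-(1 : ℝ) / 2) := by
  obtain ⟨C, hC, hCO⟩ := (isBigO_rpow_mul_cherryAmp_sub hD1 hL hx.le).exists_pos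
  obtain ⟨N₀, hN₀⟩ := eventually_atTop.1
    (hCO.bound.and ((eventually_pos_zN hD1 x).and (eventually_gt_atTop 0)))
  refine ⟨C, hC, N₀, fun N hN => ?_⟩
  obtain ⟨hbound, hzN, hNpos⟩ := hN₀ N hN
  rw [norm_of_nonneg (rpow_nonneg hNpos.le _)] at hbound
  exact ⟨hzN, hbound⟩

/-- Exact asymptotics of the cherry-tree amplitudes (Main Bound, exact part): for
`3 ≤ D ≤ 5`, `L ≥ 1`, `x > 0`, one has
`N^{D/2-1}·A_L(N) = 8√D·catalan(L-1)·x^{1/2-L}/(16(D-1))^L + O(N^{-1/2})`. -/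
theorem cherry_tree_asymptotics (D : ℕ) (hD1 : 3 ≤ D) (hD2 : D ≤ 5)
    (L : ℕ) (hL : 1 ≤ L) (x : ℝ) (hx : 0 < x) :
    ∃ C > (0 : ℝ), ∃ N₀ : ℝ, ∀ N : ℝ, N₀ ≤ N →
      0 < 1 / (4 * (D : ℝ)) - x * N ^ (-((D : ℝ) - 2)) ∧
      |N ^ ((D : ℝ) / 2 - 1) * cherryAmp D L x N -
          8 * Real.sqrt (D : ℝ) * (catalan (L - 1) : ℝ) * x ^ ((1 : ℝ) / 2 - (L : ℝ)) /
            (16 * ((D : ℝ) - 1)) ^ L|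
        ≤ C * N ^ (-(1 : ℝ) / 2) :=
  cherry_tree_asymptotics_general D hD1 L hL x hx
end

section
/- Let D ≥ 3 be an integer, set x_c = 1/(4(D−1)), and let x be a real number with x ≥ x_c. Then the series ∑_{L=1}^∞ catalan(L−1)/(16·x·(D−1))^L converges, and 8·√(D·x) · ∑_{L=1}^∞ catalan(L−1)/(16·x·(D−1))^L = 4·√D·(√x − √(x − x_c)). -/
/-!
With `A = (16x(D-1))⁻¹`, the hypothesis `x ≥ x_c` is exactly `0 ≤ A ≤ 1/4`. On that interval the
partial sums of `f(A) = ∑ catalan k · A^(k+1)` are bounded by `1/2`, because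
`∑_{k<n} catalan k / 4^(k+1) = 1/2 - centralBinom n / (2·4^n)` telescopes. The Catalan recursion
and the Cauchy product give `f² = f - A`, and `f ≤ 1/2` selects the root
`f = (1 - √(1 - 4A))/2`. Finally `x(1 - 4A) = x - x_c`.
-/

open Finset

lemma catalan_div_four_pow_eq_sub (n : ℕ) :
    (catalan n : ℝ) / 4 ^ (n + 1)
      = (n.centralBinom : ℝ) / (2 * 4 ^ n) - ((n + 1).centralBinom : ℝ) / (2 * 4 ^ (n + 1)) := by
  have hcentral : ((n : ℝ) + 1) * (n + 1).centralBinom = 2 * (2 * n + 1) * n.centralBinom := by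
    exact_mod_cast Nat.succ_mul_centralBinom_succ n
  have hcatalan : ((n : ℝ) + 1) * catalan n = n.centralBinom := by
    exact_mod_cast succ_mul_catalan_eq_centralBinom n
  have hn : (n : ℝ) + 1 ≠ 0 := by positivity
  rw [pow_succ]
  field_simp
  refine mul_left_cancel₀ hn ?_
  linear_combination 2 * hcatalan + hcentral

lemma sum_range_catalan_div_four_pow (n : ℕ) :
    ∑ k ∈ range n, (catalan k : ℝ) / 4 ^ (k + 1)
      = 1 / 2 - (n.centralBinom : ℝ) / (2 * 4 ^ n) := by
  simp_rw [catalan_div_four_pow_eq_sub]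
  rw [sum_range_sub' (fun k => (k.centralBinom : ℝ) / (2 * 4 ^ k))]
  norm_num

section CatalanSeries

variable {A : ℝ}

lemma sum_range_catalan_mul_pow_le_half (h0 : 0 ≤ A) (h4 : A ≤ 1 / 4) (n : ℕ) :
    ∑ k ∈ range n, (catalan k : ℝ) * A ^ (k + 1) ≤ 1 / 2 :=
  calc ∑ k ∈ range n, (catalan k : ℝ) * A ^ (k + 1)
      ≤ ∑ k ∈ range n, (catalan k : ℝ) / 4 ^ (k + 1) := by
        gcongr with k
        rw [div_eq_mul_one_div, ← one_div_pow]
        gcongr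
    _ = 1 / 2 - (n.centralBinom : ℝ) / (2 * 4 ^ n) := sum_range_catalan_div_four_pow n
    _ ≤ 1 / 2 := sub_le_self _ (by positivity)

lemma summable_catalan_mul_pow (h0 : 0 ≤ A) (h4 : A ≤ 1 / 4) :
    Summable (fun k : ℕ => (catalan k : ℝ) * A ^ (k + 1)) :=
  summable_of_sum_range_le (fun _ => by positivity) (sum_range_catalan_mul_pow_le_half h0 h4)

lemma sum_antidiagonal_catalan_mul_pow (n : ℕ) :
    ∑ ij ∈ antidiagonal n,
        ((catalan ij.1 : ℝ) * A ^ (ij.1 + 1)) * ((catalan ij.2 : ℝ) * A ^ (ij.2 + 1))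
      = (catalan (n + 1) : ℝ) * A ^ (n + 2) := by
  rw [catalan_succ' n, Nat.cast_sum, sum_mul]
  refine sum_congr rfl fun ij hij => ?_
  have hdeg : ij.1 + 1 + (ij.2 + 1) = n + 2 := by
    rw [HasAntidiagonal.mem_antidiagonal] at hij
    omega
  rw [Nat.cast_mul, ← hdeg, pow_add]
  ring

lemma tsum_catalan_mul_pow_mul_self
    (h : Summable (fun k : ℕ => ‖(catalan k : ℝ) * A ^ (k + 1)‖)) :
    (∑' k : ℕ, (catalan k : ℝ) * A ^ (k + 1)) * ∑' k : ℕ, (catalan k : ℝ) * A ^ (k + 1)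
      = (∑' k : ℕ, (catalan k : ℝ) * A ^ (k + 1)) - A := by
  rw [tsum_mul_tsum_eq_tsum_sum_antidiagonal_of_summable_norm h h,
    tsum_congr sum_antidiagonal_catalan_mul_pow, h.of_norm.tsum_eq_zero_add]
  simp [catalan_zero]

theorem tsum_catalan_mul_pow (h0 : 0 ≤ A) (h4 : A ≤ 1 / 4) :
    ∑' k : ℕ, (catalan k : ℝ) * A ^ (k + 1) = (1 - Real.sqrt (1 - 4 * A)) / 2 := by
  set f := ∑' k : ℕ, (catalan k : ℝ) * A ^ (k + 1)
  have hsummable := summable_catalan_mul_pow h0 h4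
  have hquadratic : f * f = f - A := tsum_catalan_mul_pow_mul_self hsummable.norm
  have hle : f ≤ 1 / 2 :=
    Real.tsum_le_of_sum_range_le (fun _ => by positivity) (sum_range_catalan_mul_pow_le_half h0 h4)
  have hroot : Real.sqrt (1 - 4 * A) = 1 - 2 * f := by
    rw [show 1 - 4 * A = (1 - 2 * f) ^ 2 by linear_combination -4 * hquadratic,
      Real.sqrt_sq (by linarith)]
  rw [hroot]
  ring

end CatalanSeries

/-- Resummation of the cherry-tree series: for an integer `D ≥ 3`,
`x_c = 1/(4(D-1))` and `x ≥ x_c`, the series `∑_{L≥1} catalan(L-1)/(16x(D-1))^L`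
(here indexed by `L = k+1`, `k ≥ 0`) converges and
`8√(Dx)·∑ = 4√D·(√x - √(x - x_c))`. -/
theorem cherry_tree_resummation (D : ℕ) (hD : 3 ≤ D) (x : ℝ)
    (hx : 1 / (4 * ((D : ℝ) - 1)) ≤ x) :
    Summable (fun k : ℕ => (catalan k : ℝ) / (16 * x * ((D : ℝ) - 1)) ^ (k + 1)) ∧
    8 * Real.sqrt ((D : ℝ) * x) *
        ∑' k : ℕ, (catalan k : ℝ) / (16 * x * ((D : ℝ) - 1)) ^ (k + 1)
      = 4 * Real.sqrt (D : ℝ) *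
          (Real.sqrt x - Real.sqrt (x - 1 / (4 * ((D : ℝ) - 1)))) := by
  have hD1 : (0 : ℝ) < D - 1 := by
    have : (3 : ℝ) ≤ D := by exact_mod_cast hD
    linarith
  have hx0 : 0 < x := lt_of_lt_of_le (by positivity) hx
  set A := (16 * x * ((D : ℝ) - 1))⁻¹
  have hterms : (fun k : ℕ => (catalan k : ℝ) / (16 * x * ((D : ℝ) - 1)) ^ (k + 1))
      = fun k : ℕ => (catalan k : ℝ) * A ^ (k + 1) := by
    simp only [div_eq_mul_inv, inv_pow, A]
  have hxA : x * (4 * A) = 1 / (4 * ((D : ℝ) - 1)) := by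
    simp only [A]
    field_simp
    ring
  have hA0 : 0 ≤ A := by positivity
  have hA4 : A ≤ 1 / 4 := by nlinarith
  refine ⟨hterms ▸ summable_catalan_mul_pow hA0 hA4, ?_⟩
  rw [hterms, tsum_catalan_mul_pow hA0 hA4, Real.sqrt_mul (Nat.cast_nonneg D), ← hxA,
    ← mul_one_sub, Real.sqrt_mul hx0.le]
  ring
end

section
/- Let D ≥ 3 be an integer, let x > 0 be real, and set T(w) = (1 − √(1 − 4w))/(2w). Then there exist constants C > 0 and N₀ such that for all real N ≥ N₀ (in particular N large enough that 0 < 1/(4D) − x·N^{2−D}), |T(D·(1/(4D) − x·N^{2−D})) − (2 − 4·√(D·x)·N^{1−D/2})| ≤ C·N^{2−D}. -/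
/-!
Writing the coupling as `D z = (1 - v²)/4` with `v = 2√(Dx)·N^{1-D/2}` turns the square root in
`T` into `v`, and `T((1 - v²)/4) = 2/(1 + v) = 2 - 2v + 2v²/(1 + v)`. Since `D ≥ 3`,
`v² = 4Dx·N^{2-D} → 0`, so for large `N` the coupling is admissible and the remainder is at most
`2v² = 8Dx·N^{2-D}`.
-/

open Filter Topology

theorem Tgf_one_sub_sq_div_four {v : ℝ} (hv : 0 ≤ v) (hv1 : v ≠ 1) :
    Tgf ((1 - v ^ 2) / 4) = 2 / (1 + v) := by
  have hsqrt : Real.sqrt (1 - 4 * ((1 - v ^ 2) / 4)) = v := by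
    rw [show 1 - 4 * ((1 - v ^ 2) / 4) = v ^ 2 by ring, Real.sqrt_sq hv]
  have hv1' : 1 - v ≠ 0 := sub_ne_zero.2 hv1.symm
  have hv2 : 1 + v ≠ 0 := by positivity
  rw [Tgf, hsqrt, show 1 - v ^ 2 = (1 - v) * (1 + v) by ring]
  field_simp
  ring

theorem abs_two_div_one_add_sub_le {v : ℝ} (hv : 0 ≤ v) :
    |2 / (1 + v) - (2 - 2 * v)| ≤ 2 * v ^ 2 := by
  have hv1 : 0 < 1 + v := by positivity
  have hrem : 2 / (1 + v) - (2 - 2 * v) = 2 * v ^ 2 / (1 + v) := by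
    field_simp
    ring
  rw [hrem, abs_of_nonneg (by positivity)]
  exact div_le_self (by positivity) (by linarith)

theorem sq_sqrt_mul_rpow_one_sub_half {a N : ℝ} (ha : 0 ≤ a) (hN : 0 ≤ N) (d : ℝ) :
    (Real.sqrt a * N ^ (1 - d / 2)) ^ 2 = a * N ^ (2 - d) := by
  rw [mul_pow, Real.sq_sqrt ha, ← Real.rpow_natCast, ← Real.rpow_mul hN]
  norm_num [sub_mul, div_mul_cancel₀]

theorem eventually_mul_rpow_two_sub_lt {d : ℝ} (hd : 2 < d) (c : ℝ) :
    ∀ᶠ N : ℝ in atTop, c * N ^ (2 - d) < 1 := by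
  have hlim : Tendsto (fun N : ℝ => c * N ^ (2 - d)) atTop (𝓝 0) := by
    simpa [neg_sub] using (tendsto_rpow_neg_atTop (sub_pos.2 hd)).const_mul c
  exact hlim.eventually_lt_const one_pos

/-- Expansion of the melonic two-point function at the rescaled coupling
`z = 1/(4D) - x·N^{2-D}`: for `D ≥ 3` and `x > 0`,
`T(Dz) = 2 - 4√(Dx)·N^{1-D/2} + O(N^{2-D})`. -/
theorem melonic_double_scaling_expansion (D : ℕ) (hD : 3 ≤ D) (x : ℝ) (hx : 0 < x) :
    ∃ C > (0 : ℝ), ∃ N₀ : ℝ, ∀ N : ℝ, N₀ ≤ N →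
      0 < 1 / (4 * (D : ℝ)) - x * N ^ ((2 : ℝ) - (D : ℝ)) ∧
      |Tgf ((D : ℝ) * (1 / (4 * (D : ℝ)) - x * N ^ ((2 : ℝ) - (D : ℝ)))) -
          (2 - 4 * Real.sqrt ((D : ℝ) * x) * N ^ (1 - (D : ℝ) / 2))|
        ≤ C * N ^ ((2 : ℝ) - (D : ℝ)) := by
  have hD0 : (0 : ℝ) < D := by exact_mod_cast (by omega : 0 < D)
  have hD2 : (2 : ℝ) < D := by exact_mod_cast hD
  obtain ⟨N₀, hN₀⟩ := eventually_atTop.1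
    ((eventually_mul_rpow_two_sub_lt hD2 (4 * D * x)).and (eventually_gt_atTop 0))
  refine ⟨8 * D * x, by positivity, N₀, fun N hN => ?_⟩
  obtain ⟨hsmall, hN0⟩ := hN₀ N hN
  set v := 2 * Real.sqrt (D * x) * N ^ (1 - (D : ℝ) / 2) with hv
  have hv0 : 0 ≤ v := by positivity
  have hv2 : v ^ 2 = 4 * D * x * N ^ ((2 : ℝ) - D) := by
    rw [hv, mul_assoc, mul_pow, sq_sqrt_mul_rpow_one_sub_half (by positivity) hN0.le]
    ring
  have hcoupling : (D : ℝ) * (1 / (4 * D) - x * N ^ ((2 : ℝ) - D)) = (1 - v ^ 2) / 4 := by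
    rw [hv2]
    field_simp
  have hv1 : v < 1 := by nlinarith
  refine ⟨by rw [sub_pos, lt_div_iff₀ (by positivity)]; linarith, ?_⟩
  rw [hcoupling, Tgf_one_sub_sq_div_four hv0 hv1.ne, show 4 * Real.sqrt (D * x) *
    N ^ (1 - (D : ℝ) / 2) = 2 * v by rw [hv]; ring]
  calc _ ≤ 2 * v ^ 2 := abs_two_div_one_add_sub_le hv0
    _ = 8 * D * x * N ^ ((2 : ℝ) - D) := by rw [hv2]; ring
end

section
/- Let D be an integer with 3 ≤ D ≤ 5, set x_c = 1/(4(D−1)) and T(w) = (1 − √(1 − 4w))/(2w), and let x > x_c be real. For real N large enough that 0 < 1/(4D) − x·N^{2−D}, define Ḡ(x, N) = T(D·(1/(4D) − x·N^{2−D})) + 4·N^{1−D/2}·√D·(√x − √(x − x_c)). Then there exist constants C > 0 and N₀ such that for all N ≥ N₀, |Ḡ(x, N) − (2 − 4·N^{1−D/2}·√(D·(x − x_c)))| ≤ C·N^{1/2−D/2}. -/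
/-- The melonic-plus-cherry-tree approximation of the two-point function in the
double scaling regime. -/
noncomputable def Gbar (D : ℕ) (x N : ℝ) : ℝ :=
  Tgf ((D : ℝ) * (1 / (4 * (D : ℝ)) - x * N ^ ((2 : ℝ) - (D : ℝ)))) +
    4 * N ^ (1 - (D : ℝ) / 2) * Real.sqrt (D : ℝ) *
      (Real.sqrt x - Real.sqrt (x - 1 / (4 * ((D : ℝ) - 1))))

/-!
With `u = √(D x) · N^{1 - D/2}` the melonic argument is `1/4 - u²`, where the plane-tree
function is rational: `T(1/4 - u²) = 2 / (1 + 2u)`. The cherry-tree term contributes `4u` up to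
`4 N^{1-D/2} √(D (x - x_c))`, so the error is `2/(1 + 2u) + 4u - 2 = 8u²/(1 + 2u) ≤ 8 D x N^{2-D}`,
which is `O(N^{1/2 - D/2})` as soon as `D ≥ 3`.
-/

open Real

theorem Tgf_quarter_sub_sq {u : ℝ} (hu : 0 ≤ u) (hu' : u ≠ 1 / 2) :
    Tgf (1 / 4 - u ^ 2) = 2 / (1 + 2 * u) := by
  have hsqrt : √(1 - 4 * (1 / 4 - u ^ 2)) = 2 * u := by
    rw [show 1 - 4 * (1 / 4 - u ^ 2) = (2 * u) ^ 2 by ring, sqrt_sq (by positivity)]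
  have h₁ : 1 - 2 * u ≠ 0 := fun h => hu' (by linarith)
  have h₂ : 1 + 2 * u ≠ 0 := by positivity
  rw [Tgf, hsqrt, div_eq_div_iff (by contrapose! h₁; nlinarith) h₂]
  ring

theorem abs_two_div_one_add_two_mul_add_sub_two_le {u : ℝ} (hu : 0 ≤ u) :
    |2 / (1 + 2 * u) + 4 * u - 2| ≤ 8 * u ^ 2 := by
  have hpos : 0 < 1 + 2 * u := by positivity
  have heq : 2 / (1 + 2 * u) + 4 * u - 2 = 8 * u ^ 2 / (1 + 2 * u) := by
    field_simp
    ring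
  rw [heq, abs_of_nonneg (by positivity)]
  exact div_le_self (by positivity) (by linarith)

theorem sq_sqrt_mul_rpow {a N : ℝ} (ha : 0 ≤ a) (hN : 0 < N) (s : ℝ) :
    (√a * N ^ s) ^ 2 = a * N ^ (2 * s) := by
  rw [mul_pow, sq_sqrt ha, ← rpow_natCast, ← rpow_mul hN.le, Nat.cast_ofNat, mul_comm s]

theorem mul_rpow_two_sub_lt_quarter {a d N : ℝ} (ha : 0 ≤ a) (hd : 3 ≤ d) (hN : 1 ≤ N)
    (haN : 4 * a < N) : a * N ^ (2 - d) < 1 / 4 := by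
  have hpow : N ^ (2 - d) ≤ N⁻¹ := by
    simpa [rpow_neg_one] using rpow_le_rpow_of_exponent_le hN (by linarith : 2 - d ≤ -1)
  calc a * N ^ (2 - d) ≤ a * N⁻¹ := by gcongr
    _ = a / N := (div_eq_mul_inv a N).symm
    _ < 1 / 4 := by rw [div_lt_div_iff₀ (by linarith) (by norm_num)]; linarith

theorem Gbar_sub_eq {D : ℕ} {x N : ℝ} (hD : D ≠ 0) (hx : 0 ≤ x) (hN : 0 < N) :
    Gbar D x N - (2 - 4 * N ^ (1 - (D : ℝ) / 2) * √((D : ℝ) * (x - 1 / (4 * ((D : ℝ) - 1)))))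
      = Tgf (1 / 4 - (√(D * x) * N ^ (1 - (D : ℝ) / 2)) ^ 2)
        + 4 * (√(D * x) * N ^ (1 - (D : ℝ) / 2)) - 2 := by
  have hD' : (D : ℝ) ≠ 0 := Nat.cast_ne_zero.mpr hD
  have harg : (D : ℝ) * (1 / (4 * D) - x * N ^ ((2 : ℝ) - D))
      = 1 / 4 - (√(D * x) * N ^ (1 - (D : ℝ) / 2)) ^ 2 := by
    rw [sq_sqrt_mul_rpow (by positivity) hN, show 2 * (1 - (D : ℝ) / 2) = 2 - D by ring]
    field_simp
  rw [Gbar, harg, sqrt_mul (Nat.cast_nonneg D), sqrt_mul (Nat.cast_nonneg D)]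
  ring

theorem double_scaling_limit_general (D : ℕ) (hD1 : 3 ≤ D) (x : ℝ)
    (hx : 1 / (4 * ((D : ℝ) - 1)) < x) :
    ∃ C > (0 : ℝ), ∃ N₀ : ℝ, ∀ N : ℝ, N₀ ≤ N →
      0 < 1 / (4 * (D : ℝ)) - x * N ^ ((2 : ℝ) - (D : ℝ)) ∧
      |Gbar D x N -
          (2 - 4 * N ^ (1 - (D : ℝ) / 2) *
            Real.sqrt ((D : ℝ) * (x - 1 / (4 * ((D : ℝ) - 1)))))|
        ≤ C * N ^ ((1 : ℝ) / 2 - (D : ℝ) / 2) := by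
  have hD : (3 : ℝ) ≤ D := by exact_mod_cast hD1
  have hx0 : 0 < x := lt_trans (by rw [one_div_pos]; linarith) hx
  refine ⟨8 * D * x, by positivity, 4 * D * x + 1, fun N hN => ?_⟩
  have hN1 : 1 ≤ N := by nlinarith
  have hsmall : D * x * N ^ ((2 : ℝ) - D) < 1 / 4 :=
    mul_rpow_two_sub_lt_quarter (by positivity) hD hN1 (by linarith)
  set u := √(D * x) * N ^ (1 - (D : ℝ) / 2)
  have hu2 : u ^ 2 = D * x * N ^ ((2 : ℝ) - D) := by
    rw [sq_sqrt_mul_rpow (by positivity) (by linarith)]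
    ring_nf
  have hu0 : 0 ≤ u := by positivity
  refine ⟨?_, ?_⟩
  · rw [sub_pos, lt_div_iff₀ (by positivity)]
    linarith
  rw [Gbar_sub_eq (by omega) hx0.le (by linarith),
    Tgf_quarter_sub_sq hu0 (by nlinarith : u < 1 / 2).ne]
  calc _ ≤ 8 * u ^ 2 := abs_two_div_one_add_two_mul_add_sub_two_le hu0
    _ = 8 * D * x * N ^ ((2 : ℝ) - D) := by rw [hu2]; ring
    _ ≤ 8 * D * x * N ^ ((1 : ℝ) / 2 - D / 2) := by
      gcongr _ * ?_
      exact rpow_le_rpow_of_exponent_le hN1 (by linarith)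

/-- The double scaling limit (Theorem 5 of the paper): for `3 ≤ D ≤ 5` and
`x > x_c = 1/(4(D-1))`, the double-scaled two-point function satisfies
`Ḡ(x,N) = 2 - 4·N^{1-D/2}·√(D(x - x_c)) + O(N^{1/2-D/2})`. -/
theorem double_scaling_limit (D : ℕ) (hD1 : 3 ≤ D) (hD2 : D ≤ 5) (x : ℝ)
    (hx : 1 / (4 * ((D : ℝ) - 1)) < x) :
    ∃ C > (0 : ℝ), ∃ N₀ : ℝ, ∀ N : ℝ, N₀ ≤ N →
      0 < 1 / (4 * (D : ℝ)) - x * N ^ ((2 : ℝ) - (D : ℝ)) ∧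
      |Gbar D x N -
          (2 - 4 * N ^ (1 - (D : ℝ) / 2) *
            Real.sqrt ((D : ℝ) * (x - 1 / (4 * ((D : ℝ) - 1)))))|
        ≤ C * N ^ ((1 : ℝ) / 2 - (D : ℝ) / 2) :=
  double_scaling_limit_general D hD1 x hx
end

section
/- Let G be a finite tree (a connected acyclic simple graph) on a nonempty vertex set V, and let u assign to each edge e of G a real number u_e with 0 ≤ u_e ≤ 1. Define the real square matrix W indexed by V by W_{ii} = 1 for every i, and, for i ≠ j, W_{ij} = the minimum of u_e over the edges e lying on the unique path in G from i to j. Then W is symmetric and positive semidefinite. -/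
/-!
The path from `i` to `j` uses only edges of the paths from `i` to `k` and from `k` to `j`, so
`W` is an ultrametric matrix, `min (W i k) (W k j) ≤ W i j`, with unit diagonal and entries in
`[0, 1]`. Such a matrix is a mixture of equivalence-relation matrices,
`W i j = ∫₀¹ 1[t ≤ W i j] dt`, since for each `t ≤ 1` the relation `t ≤ W i j` is an
equivalence; and the `0/1` matrix of an equivalence is `B Bᵀ`, with `B` the class-membership
matrix.
-/

open MeasureTheory Set Matrix

namespace Matrix

variable {n : Type*} [Fintype n]

theorem posSemidef_of_setoid {R : Type*} [Ring R] [PartialOrder R] [StarRing R]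
    [StarOrderedRing R] (s : Setoid n) [DecidableRel s.r] :
    (of fun i j => if s.r i j then (1 : R) else 0).PosSemidef := by
  classical
  let B : Matrix n (Quotient s) R := of fun i q => if Quotient.mk s i = q then 1 else 0
  convert posSemidef_self_mul_conjTranspose B using 1
  ext i j
  simp [B, mul_apply, Quotient.eq, apply_ite (star : R → R)]

theorem posSemidef_integral {α : Type*} [MeasurableSpace α] {μ : Measure α}
    {A : α → Matrix n n ℝ} (hA : ∀ᵐ t ∂μ, (A t).PosSemidef)
    (hint : ∀ i j, Integrable (fun t => A t i j) μ) :
    (of fun i j => ∫ t, A t i j ∂μ).PosSemidef := by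
  refine .of_dotProduct_mulVec_nonneg ?_ fun x => ?_
  · ext i j
    simpa using integral_congr_ae (hA.mono fun t ht => ht.isHermitian.apply i j)
  · have hquad : star x ⬝ᵥ (of fun i j => ∫ t, A t i j ∂μ) *ᵥ x =
        ∫ t, star x ⬝ᵥ A t *ᵥ x ∂μ := by
      simp only [dotProduct, mulVec, of_apply]
      rw [integral_finsetSum _ fun i _ => ?_]
      · refine Finset.sum_congr rfl fun i _ => ?_
        rw [integral_const_mul, integral_finsetSum _ fun j _ => (hint i j).mul_const _]
        simp_rw [integral_mul_const]
      · exact (integrable_finsetSum _ fun j _ => (hint i j).mul_const _).const_mul _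
    rw [hquad]
    exact integral_nonneg_of_ae (hA.mono fun t ht => ht.dotProduct_mulVec_nonneg x)

theorem setIntegral_Ioc_zero_one_indicator_Iic {w : ℝ} (hw : w ∈ Icc 0 1) :
    ∫ t in Ioc 0 1, (Iic w).indicator 1 t = w := by
  rw [integral_indicator_one measurableSet_Iic, measureReal_restrict_apply measurableSet_Iic,
    Iic_inter_Ioc_of_le hw.2, Real.volume_real_Ioc_of_le hw.1, sub_zero]

theorem posSemidef_of_ultrametric {W : Matrix n n ℝ} (hsymm : W.IsSymm) (hdiag : ∀ i, W i i = 1)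
    (hmem : ∀ i j, W i j ∈ Icc 0 1) (hultra : ∀ i j k, min (W i k) (W k j) ≤ W i j) :
    W.PosSemidef := by
  classical
  have hlevel :
      ∀ t ≤ 1, (of fun i j => (Iic (W i j)).indicator (1 : ℝ → ℝ) t).PosSemidef := by
    intro t ht
    let s : Setoid n :=
      { r := fun i j => t ≤ W i j
        iseqv := ⟨fun i => (hdiag i).symm ▸ ht, fun h => (hsymm.apply _ _).symm ▸ h,
          fun h₁ h₂ => (le_min h₁ h₂).trans (hultra _ _ _)⟩ }
    convert posSemidef_of_setoid (R := ℝ) s using 1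
    ext i j
    simp only [of_apply, indicator_apply, mem_Iic, Pi.one_apply]
    exact if_congr Iff.rfl rfl rfl
  have hmix := posSemidef_integral (μ := volume.restrict (Ioc (0 : ℝ) 1))
    (ae_restrict_of_forall_mem measurableSet_Ioc fun t ht => hlevel t ht.2)
    fun i j => (integrable_const 1).indicator measurableSet_Iic
  convert hmix using 1
  ext i j
  exact (setIntegral_Ioc_zero_one_indicator_Iic (hmem i j)).symm

end Matrix

namespace SimpleGraph

variable {V : Type*} {G : SimpleGraph V}

namespace Walk

variable {i j : V} {u : Sym2 V → ℝ}

noncomputable def minWeight (u : Sym2 V → ℝ) (p : G.Walk i j) : ℝ :=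
  sInf (u '' {e | e ∈ p.edges})

theorem exists_mem_edges_of_ne (p : G.Walk i j) (h : i ≠ j) : ∃ e, e ∈ p.edges :=
  List.exists_mem_of_ne_nil _ fun hnil => h (edges_eq_nil.mp hnil).eq

theorem minWeight_le (p : G.Walk i j) {e : Sym2 V} (he : e ∈ p.edges) : p.minWeight u ≤ u e :=
  csInf_le ((List.finite_toSet p.edges).image u).bddBelow ⟨e, he, rfl⟩

theorem le_minWeight (p : G.Walk i j) (h : i ≠ j) {a : ℝ} (ha : ∀ e ∈ p.edges, a ≤ u e) :
    a ≤ p.minWeight u := by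
  obtain ⟨e, he⟩ := p.exists_mem_edges_of_ne h
  exact le_csInf ⟨u e, e, he, rfl⟩ (by rintro _ ⟨e, he, rfl⟩; exact ha e he)

@[simp]
theorem minWeight_reverse (p : G.Walk i j) : p.reverse.minWeight u = p.minWeight u := by
  simp [minWeight]

theorem minWeight_mem_Icc (hu : ∀ e ∈ G.edgeSet, u e ∈ Icc 0 1) (p : G.Walk i j)
    (h : i ≠ j) :
    p.minWeight u ∈ Icc 0 1 := by
  obtain ⟨e, he⟩ := p.exists_mem_edges_of_ne h
  exact ⟨p.le_minWeight h fun e he => (hu e (p.edges_subset_edgeSet he)).1,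
    (p.minWeight_le he).trans (hu e (p.edges_subset_edgeSet he)).2⟩

end Walk

theorem IsAcyclic.min_minWeight_le (hG : G.IsAcyclic) {u : Sym2 V → ℝ} {i j k : V}
    {p : G.Walk i j} (hp : p.IsPath) (hij : i ≠ j) (q : G.Walk i k) (r : G.Walk k j) :
    min (q.minWeight u) (r.minWeight u) ≤ p.minWeight u := by
  classical
  have hbypass : p = (q.append r).bypass := congrArg Subtype.val <|
    (hG.subsingleton_path i j).elim ⟨p, hp⟩ ⟨_, (q.append r).bypass_isPath⟩
  refine p.le_minWeight hij fun e he => ?_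
  have hqr : e ∈ (q.append r).edges := Walk.edges_bypass_subset_edges _ (hbypass ▸ he)
  rcases List.mem_append.mp (Walk.edges_append q r ▸ hqr) with hq | hr
  · exact (min_le_left _ _).trans (q.minWeight_le hq)
  · exact (min_le_right _ _).trans (r.minWeight_le hr)

end SimpleGraph

open SimpleGraph Walk in
theorem tree_min_matrix_posSemidef_general {V : Type*} [Fintype V]
    (G : SimpleGraph V) (hG : G.IsTree)
    (u : Sym2 V → ℝ) (hu : ∀ e ∈ G.edgeSet, 0 ≤ u e ∧ u e ≤ 1)
    (W : Matrix V V ℝ)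
    (hdiag : ∀ i, W i i = 1)
    (hoff : ∀ i j, i ≠ j → ∀ p : G.Walk i j, p.IsPath →
      W i j = sInf (u '' {e : Sym2 V | e ∈ p.edges})) :
    W.IsSymm ∧ W.PosSemidef := by
  choose P hP using fun i j => (hG.existsUnique_path i j).exists
  have hW : ∀ i j, i ≠ j → W i j = (P i j).minWeight u := fun i j h => hoff i j h _ (hP i j)
  have hsymm : W.IsSymm := by
    ext i j
    rcases eq_or_ne i j with rfl | h
    · rfl
    · rw [transpose_apply, hW i j h]
      exact (hoff j i h.symm _ (hP i j).reverse).trans (P i j).minWeight_reverse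
  have hmem : ∀ i j, W i j ∈ Icc 0 1 := by
    intro i j
    rcases eq_or_ne i j with rfl | h
    · simp [hdiag]
    · exact hW i j h ▸ (P i j).minWeight_mem_Icc hu h
  have hultra : ∀ i j k, min (W i k) (W k j) ≤ W i j := by
    intro i j k
    rcases eq_or_ne i j with rfl | hij
    · exact (min_le_left _ _).trans ((hmem i k).2.trans (hdiag i).ge)
    rcases eq_or_ne i k with rfl | hik
    · exact min_le_right _ _
    rcases eq_or_ne k j with rfl | hkj
    · exact min_le_left _ _
    rw [hW i j hij, hW i k hik, hW k j hkj]
    exact hG.isAcyclic.min_minWeight_le (hP i j) hij _ _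
  exact ⟨hsymm, posSemidef_of_ultrametric hsymm hdiag hmem hultra⟩

/-- Positivity of the Loop Vertex Expansion tree matrix: for a finite tree `G`
with edge parameters `u ∈ [0,1]`, the matrix `W` with `W_{ii} = 1` and, for
`i ≠ j`, `W_{ij}` the minimum of `u` over the edges of the unique path from `i`
to `j`, is symmetric and positive semidefinite. -/
theorem tree_min_matrix_posSemidef {V : Type*} [Fintype V] [Nonempty V]
    (G : SimpleGraph V) (hG : G.IsTree)
    (u : Sym2 V → ℝ) (hu : ∀ e ∈ G.edgeSet, 0 ≤ u e ∧ u e ≤ 1)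
    (W : Matrix V V ℝ)
    (hdiag : ∀ i, W i i = 1)
    (hoff : ∀ i j, i ≠ j → ∀ p : G.Walk i j, p.IsPath →
      W i j = sInf (u '' {e : Sym2 V | e ∈ p.edges})) :
    W.IsSymm ∧ W.PosSemidef :=
  tree_min_matrix_posSemidef_general G hG u hu W hdiag hoff
end
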